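/- The matrices G₂ and G₃ (of the 5-point Gromov product structures S₂ and S₃) are isospectral (same characteristic polynomial t³(t-2)(t+2)) but not similar, since their minimal polynomials differ (t²(t-2)(t+2) versus t(t-2)(t+2)). -/

import Mathlib

/-!
The characteristic polynomials are computed by cofactor expansion. For the minimal polynomials,
`G₂ ^ 4 = 4 • G₂ ^ 2` and `G₃ ^ 3 = 4 • G₃`, and the degree cannot drop: the functional
`M ↦ M 0 1 - M 1 2` kills `1, G₂, G₂ ^ 2` but not `G₂ ^ 3`, and `M ↦ M 0 2` kills `1, G₃` but
not `G₃ ^ 2`. Since the minimal polynomial is invariant under conjugation, `G₂` and `G₃` are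
not similar.
-/

open Polynomial Matrix

section minpoly

variable {K A : Type*} [Field K] [Ring A] [Algebra K A]

theorem minpoly_units_conj (u : Aˣ) (x : A) : minpoly K (u * x * ↑u⁻¹) = minpoly K x := by
  simpa [ConjAct.units_smul_def] using
    minpoly.algEquiv_eq (MulSemiringAction.toAlgEquiv K A (ConjAct.toConjAct u)) x

theorem aeval_X_pow_mul_X_sub_C_mul_X_add_C (x : A) (k : ℕ) (a : K) :
    aeval x (X ^ k * (X - C a) * (X + C a)) = x ^ (k + 2) - a ^ 2 • x ^ k := by
  have h : (X ^ k * (X - C a) * (X + C a) : K[X]) = X ^ (k + 2) - C (a ^ 2) * X ^ k := by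
    rw [C_pow]
    ring
  rw [h, map_sub, map_mul, aeval_C, aeval_X_pow, aeval_X_pow, ← Algebra.smul_def]

theorem linearMap_aeval_of_natDegree_le (φ : A →ₗ[K] K) {x : A} {n : ℕ}
    (hlow : ∀ i < n, φ (x ^ i) = 0) {q : K[X]} (hq : q.natDegree ≤ n) :
    φ (aeval x q) = q.coeff n * φ (x ^ n) := by
  rw [aeval_eq_sum_range' (Nat.lt_succ_of_le hq), Finset.sum_range_succ, map_add, map_sum,
    Finset.sum_eq_zero fun i hi => by rw [map_smul, hlow i (Finset.mem_range.1 hi), smul_zero],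
    zero_add, map_smul, smul_eq_mul]

theorem lt_natDegree_minpoly_of_linearMap {x : A} (hx : IsIntegral K x) (φ : A →ₗ[K] K)
    {n : ℕ} (hlow : ∀ i < n, φ (x ^ i) = 0) (htop : φ (x ^ n) ≠ 0) :
    n < (minpoly K x).natDegree := by
  by_contra! hle
  set q := X ^ (n - (minpoly K x).natDegree) * minpoly K x
  have hmonic : q.Monic := (monic_X_pow _).mul (minpoly.monic hx)
  have hdeg : q.natDegree = n := by
    rw [(monic_X_pow _).natDegree_mul (minpoly.monic hx), natDegree_X_pow]
    omega
  have h := linearMap_aeval_of_natDegree_le φ hlow hdeg.le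
  rw [map_mul, minpoly.aeval, mul_zero, map_zero, ← hdeg, hmonic.coeff_natDegree, hdeg,
    one_mul] at h
  exact htop h.symm

theorem minpoly_eq_of_linearMap {x : A} {p : K[X]} (hp : p.Monic) (hpx : aeval x p = 0)
    (φ : A →ₗ[K] K) {n : ℕ} (hn : p.natDegree = n + 1) (hlow : ∀ i < n, φ (x ^ i) = 0)
    (htop : φ (x ^ n) ≠ 0) : minpoly K x = p := by
  have hx : IsIntegral K x := ⟨p, hp, hpx⟩
  refine (eq_of_monic_of_dvd_of_natDegree_le (minpoly.monic hx) hp (minpoly.dvd K x hpx) ?_).symm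
  have := lt_natDegree_minpoly_of_linearMap hx φ hlow htop
  omega

end minpoly

def G₂ : Matrix (Fin 5) (Fin 5) ℝ :=
  !![0,1,0,0,1; 1,0,1,0,0; 0,1,0,0,1; 0,1,0,0,1; 1,0,0,1,0]

def G₃ : Matrix (Fin 5) (Fin 5) ℝ :=
  !![0,1,0,1,0; 1,0,1,0,0; 0,1,0,1,0; 1,0,1,0,0; 1,0,1,0,0]

theorem charpoly_G₂ : G₂.charpoly = X ^ 3 * (X - C 2) * (X + C 2) := by
  rw [Matrix.charpoly, C_ofNat]
  simp [charmatrix_apply, G₂, det_succ_row_zero, Fin.sum_univ_succ, Fin.succAbove]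
  ring

theorem charpoly_G₃ : G₃.charpoly = X ^ 3 * (X - C 2) * (X + C 2) := by
  rw [Matrix.charpoly, C_ofNat]
  simp [charmatrix_apply, G₃, det_succ_row_zero, Fin.sum_univ_succ, Fin.succAbove]
  ring

theorem G₂_sq : G₂ ^ 2 = !![2,0,1,1,0; 0,2,0,0,2; 2,0,1,1,0; 2,0,1,1,0; 0,2,0,0,2] := by
  norm_num [G₂, sq]

theorem G₂_pow_three :
    G₂ ^ 3 = !![0,4,0,0,4; 4,0,2,2,0; 0,4,0,0,4; 0,4,0,0,4; 4,0,2,2,0] := by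
  rw [pow_succ, G₂_sq, G₂]
  norm_num

theorem G₂_pow_four : G₂ ^ 4 = (4 : ℝ) • G₂ ^ 2 := by
  rw [pow_succ, G₂_pow_three, G₂_sq, G₂]
  norm_num

theorem G₃_sq : G₃ ^ 2 = !![2,0,2,0,0; 0,2,0,2,0; 2,0,2,0,0; 0,2,0,2,0; 0,2,0,2,0] := by
  norm_num [G₃, sq]

theorem G₃_pow_three : G₃ ^ 3 = (4 : ℝ) • G₃ := by
  rw [pow_succ, G₃_sq, G₃]
  norm_num

theorem minpoly_G₂ : minpoly ℝ G₂ = X ^ 2 * (X - C 2) * (X + C 2) := by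
  refine minpoly_eq_of_linearMap (((monic_X_pow 2).mul (monic_X_sub_C 2)).mul (monic_X_add_C 2))
    ?_ (entryLinearMap ℝ ℝ 0 1 - entryLinearMap ℝ ℝ 1 2) (n := 3) (by compute_degree!) ?_ ?_
  · rw [aeval_X_pow_mul_X_sub_C_mul_X_add_C, G₂_pow_four]
    norm_num
  · intro i hi
    interval_cases i
    · simp
    · simp [G₂]
    · simp [G₂_sq]
  · simp [G₂_pow_three, sub_eq_zero]

theorem minpoly_G₃ : minpoly ℝ G₃ = X * (X - C 2) * (X + C 2) := by
  refine minpoly_eq_of_linearMap ((monic_X.mul (monic_X_sub_C 2)).mul (monic_X_add_C 2))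
    ?_ (entryLinearMap ℝ ℝ 0 2) (n := 2) (by compute_degree!) ?_ ?_
  · have h := aeval_X_pow_mul_X_sub_C_mul_X_add_C G₃ 1 (2 : ℝ)
    rw [pow_one] at h
    rw [h, G₃_pow_three]
    norm_num
  · intro i hi
    interval_cases i <;> simp [G₃]
  · simp [G₃_sq]

theorem G₂_not_similar_G₃ :
    ¬ ∃ P : (Matrix (Fin 5) (Fin 5) ℝ)ˣ,
      G₂ = (P : Matrix _ _ ℝ) * G₃ * ((P⁻¹ : _ˣ) : Matrix _ _ ℝ) := by
  rintro ⟨P, hP⟩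
  have h := minpoly_units_conj (K := ℝ) P G₃
  rw [← hP, minpoly_G₂, minpoly_G₃] at h
  have h3 := congrArg (eval 3) h
  norm_num at h3

theorem G2_G3_isospectral_not_similar :
    let G₂ : Matrix (Fin 5) (Fin 5) ℝ :=
      !![0,1,0,0,1; 1,0,1,0,0; 0,1,0,0,1; 0,1,0,0,1; 1,0,0,1,0]
    let G₃ : Matrix (Fin 5) (Fin 5) ℝ :=
      !![0,1,0,1,0; 1,0,1,0,0; 0,1,0,1,0; 1,0,1,0,0; 1,0,1,0,0]
    G₂.charpoly = G₃.charpoly ∧ G₂.charpoly = X ^ 3 * (X - C 2) * (X + C 2) ∧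
    minpoly ℝ G₂ = X ^ 2 * (X - C 2) * (X + C 2) ∧
    minpoly ℝ G₃ = X * (X - C 2) * (X + C 2) ∧
    ¬ ∃ P : (Matrix (Fin 5) (Fin 5) ℝ)ˣ, G₂ = (P : Matrix (Fin 5) (Fin 5) ℝ) * G₃ * ((P⁻¹ : (Matrix (Fin 5) (Fin 5) ℝ)ˣ) : Matrix (Fin 5) (Fin 5) ℝ) := by
  exact ⟨charpoly_G₂.trans charpoly_G₃.symm, charpoly_G₂, minpoly_G₂, minpoly_G₃,
    G₂_not_similar_G₃⟩
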